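/- For positive integers n, k, t, r with 1 ≤ r ≤ k, the number of k-tuples (α¹, …, αᵏ) of partitions with total weight n such that max_i ℓ(αⁱ) = t and r is the largest index i with ℓ(αⁱ) = t, equals the number of weakly decreasing sequences of positive integers λ₁ ≥ ⋯ ≥ λ_{(t−1)k+r} with λ₁ + λ_{k+1} + λ_{2k+1} + ⋯ + λ_{(t−1)k+1} = n. -/

import Mathlib

/-!
A partition of length at most `N` is determined by its difference sequence
`d m = λ m - λ (m + 1)` on `m < N`, and every `d : Fin N → ℕ` arises. Interleaving the difference
sequences of `α 0, …, α (k - 1)`, so that position `j` of `α i` becomes position `j * k + i`, gives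
a bijection onto partitions of length at most `t * k`. The parts `λ (j * k) = ∑ i, α i j` are
tail sums over whole blocks, so the Schmidt sum of `λ` is the total weight of `α`; and the last
nonzero difference of `λ` sits at `(t - 1) * k + r - 1` exactly when `α (r - 1)` is the last
component of maximal length `t`.
-/

/-- `l` is a partition: a weakly decreasing list of positive integers. -/
def IsPartition (l : List ℕ) : Prop :=
  l.Pairwise (· ≥ ·) ∧ ∀ x ∈ l, 0 < x

/-- `l` is a strict partition: a strictly decreasing list of positive integers. -/
def IsStrict (l : List ℕ) : Prop :=
  l.Pairwise (· > ·) ∧ ∀ x ∈ l, 0 < x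

/-- Sum of the parts of `l` in positions `1, k+1, 2k+1, …` (0-indexed `0, k, 2k, …`). -/
def schmidtSum (k : ℕ) (l : List ℕ) : ℕ :=
  ∑ i ∈ Finset.range l.length, if i % k = 0 then l.getD i 0 else 0

open Finset

namespace IsPartition

variable {l l₁ l₂ : List ℕ}

lemma antitone_getD (hl : IsPartition l) : Antitone (l.getD · 0) := by
  intro a b hab
  by_cases hb : b < l.length
  · simp only [l.getD_eq_getElem 0 hb, l.getD_eq_getElem 0 (hab.trans_lt hb)]
    rcases hab.eq_or_lt with rfl | h
    · rfl
    · exact List.pairwise_iff_getElem.mp hl.1 a b _ hb h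
  · simp only [l.getD_eq_default 0 (not_lt.mp hb), zero_le]

lemma getD_ne_zero_iff (hl : IsPartition l) {m : ℕ} : l.getD m 0 ≠ 0 ↔ m < l.length := by
  refine ⟨fun h => ?_, fun hm => ?_⟩
  · by_contra hm
    exact h (l.getD_eq_default 0 (not_lt.mp hm))
  · rw [l.getD_eq_getElem 0 hm]
    exact (hl.2 _ (l.getElem_mem hm)).ne'

lemma ext_getD (h₁ : IsPartition l₁) (h₂ : IsPartition l₂)
    (h : ∀ m, l₁.getD m 0 = l₂.getD m 0) : l₁ = l₂ := by
  have hlen : l₁.length = l₂.length := eq_of_forall_lt_iff fun m => by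
    rw [← h₁.getD_ne_zero_iff, h, h₂.getD_ne_zero_iff]
  refine List.ext_getElem hlen fun i hi₁ hi₂ => ?_
  simpa only [List.getD_eq_getElem _ _ hi₁, List.getD_eq_getElem _ _ hi₂] using h i

end IsPartition

def partitionOfAntitone (N : ℕ) (f : ℕ → ℕ) : List ℕ :=
  List.ofFn fun m : Fin #{m ∈ range N | f m ≠ 0} => f m

section partitionOfAntitone

variable {N : ℕ} {f : ℕ → ℕ}

lemma Antitone.ne_zero_iff_lt_card_filter (hf : Antitone f) (hN : ∀ m, N ≤ m → f m = 0)
    {m : ℕ} : f m ≠ 0 ↔ m < #{m ∈ range N | f m ≠ 0} := by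
  have hprefix : ∀ {m m'}, f m ≠ 0 → m' ≤ m → f m' ≠ 0 := fun hm hle h =>
    hm (Nat.eq_zero_of_le_zero (h ▸ hf hle))
  refine ⟨fun hm => ?_, fun hm hfm => ?_⟩
  · have hsub : range (m + 1) ⊆ {m ∈ range N | f m ≠ 0} := fun m' hm' => by
      have hfm' := hprefix hm (Nat.lt_succ_iff.mp (mem_range.mp hm'))
      exact mem_filter.mpr ⟨mem_range.mpr (Nat.lt_of_not_le (mt (hN m') hfm')), hfm'⟩
    simpa using card_le_card hsub
  · have hsub : {m ∈ range N | f m ≠ 0} ⊆ range m := fun m' hm' =>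
      mem_range.mpr (Nat.lt_of_not_le fun h => hprefix (mem_filter.mp hm').2 h hfm)
    simpa using (card_le_card hsub).trans_lt' hm

lemma getD_partitionOfAntitone (hf : Antitone f) (hN : ∀ m, N ≤ m → f m = 0) (m : ℕ) :
    (partitionOfAntitone N f).getD m 0 = f m := by
  by_cases hm : m < #{m ∈ range N | f m ≠ 0}
  · rw [List.getD_eq_getElem _ _ (by simpa [partitionOfAntitone] using hm)]
    simp [partitionOfAntitone]
  · rw [List.getD_eq_default _ _ (by simpa [partitionOfAntitone] using hm)]
    exact (not_not.mp (mt (hf.ne_zero_iff_lt_card_filter hN).mp hm)).symm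

lemma isPartition_partitionOfAntitone (hf : Antitone f) (hN : ∀ m, N ≤ m → f m = 0) :
    IsPartition (partitionOfAntitone N f) := by
  refine ⟨List.pairwise_ofFn.mpr fun i j hij => hf hij.le, fun x hx => ?_⟩
  obtain ⟨m, rfl⟩ := List.mem_ofFn.mp hx
  exact Nat.pos_of_ne_zero ((hf.ne_zero_iff_lt_card_filter hN).mpr m.isLt)

lemma length_partitionOfAntitone_le : (partitionOfAntitone N f).length ≤ N := by
  simpa [partitionOfAntitone] using card_filter_le (range N) (f · ≠ 0)

end partitionOfAntitone

def partDiff (l : List ℕ) (m : ℕ) : ℕ := l.getD m 0 - l.getD (m + 1) 0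

def tailSum (N : ℕ) (d : ℕ → ℕ) (m : ℕ) : ℕ := ∑ m' ∈ Ico m N, d m'

section tailSum

variable {N : ℕ} {d : ℕ → ℕ}

lemma tailSum_antitone : Antitone (tailSum N d) := fun _ _ h =>
  sum_le_sum_of_subset (Ico_subset_Ico_left h)

lemma tailSum_of_le {m : ℕ} (h : N ≤ m) : tailSum N d m = 0 := by
  simp [tailSum, Ico_eq_empty_of_le h]

lemma tailSum_sub_tailSum_succ {m : ℕ} (h : m < N) :
    tailSum N d m - tailSum N d (m + 1) = d m := by
  rw [tailSum, sum_eq_sum_Ico_succ_bot h, tailSum, Nat.add_sub_cancel]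

end tailSum

lemma IsPartition.tailSum_partDiff {l : List ℕ} (hl : IsPartition l) {N : ℕ} (h : l.length ≤ N)
    (m : ℕ) : tailSum N (partDiff l) m = l.getD m 0 := by
  induction h' : N - m generalizing m with
  | zero => rw [tailSum_of_le (by omega), List.getD_eq_default _ _ (by omega)]
  | succ n ih =>
    rw [tailSum, sum_eq_sum_Ico_succ_bot (by omega), ← tailSum, ih (m + 1) (by omega), partDiff,
      Nat.sub_add_cancel (hl.antitone_getD m.le_succ)]

lemma IsPartition.length_eq_iff {l : List ℕ} (hl : IsPartition l) {N L : ℕ} (hN : l.length ≤ N)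
    (hL : 0 < L) : l.length = L ↔ partDiff l (L - 1) ≠ 0 ∧ ∀ m ∈ Ico L N, partDiff l m = 0 := by
  constructor
  · rintro rfl
    refine ⟨?_, fun m hm => ?_⟩
    · rw [partDiff, Nat.sub_add_cancel hL, List.getD_eq_default _ _ le_rfl, Nat.sub_zero]
      exact hl.getD_ne_zero_iff.mpr (by omega)
    · rw [partDiff, List.getD_eq_default _ _ (mem_Ico.mp hm).1, Nat.zero_sub]
  · rintro ⟨hlast, hrest⟩
    have hL_le : l.length ≤ L := Nat.le_of_not_lt fun hlt => hl.getD_ne_zero_iff.mpr hlt <| by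
      rw [← hl.tailSum_partDiff hN, tailSum, sum_eq_zero hrest]
    have hpred : L - 1 < l.length :=
      hl.getD_ne_zero_iff.mp fun h => hlast (by rw [partDiff, h, Nat.zero_sub])
    omega

lemma IsPartition.length_eq_iff_partDiff_pred_ne_zero {l : List ℕ} (hl : IsPartition l) {t : ℕ}
    (hlen : l.length ≤ t) (ht : 0 < t) : l.length = t ↔ partDiff l (t - 1) ≠ 0 := by
  simp [hl.length_eq_iff hlen ht]

def partitionOfDiff (N : ℕ) (d : ℕ → ℕ) : List ℕ := partitionOfAntitone N (tailSum N d)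

section partitionOfDiff

variable {N : ℕ} {d : ℕ → ℕ}

lemma getD_partitionOfDiff (m : ℕ) : (partitionOfDiff N d).getD m 0 = tailSum N d m :=
  getD_partitionOfAntitone tailSum_antitone (fun _ => tailSum_of_le) m

lemma isPartition_partitionOfDiff : IsPartition (partitionOfDiff N d) :=
  isPartition_partitionOfAntitone tailSum_antitone (fun _ => tailSum_of_le)

lemma length_partitionOfDiff_le : (partitionOfDiff N d).length ≤ N :=
  length_partitionOfAntitone_le

lemma partDiff_partitionOfDiff {m : ℕ} (h : m < N) : partDiff (partitionOfDiff N d) m = d m := by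
  rw [partDiff, getD_partitionOfDiff, getD_partitionOfDiff, tailSum_sub_tailSum_succ h]

lemma partitionOfDiff_congr {d' : ℕ → ℕ} (h : ∀ m < N, d m = d' m) :
    partitionOfDiff N d = partitionOfDiff N d' := by
  have : tailSum N d = tailSum N d' := funext fun m =>
    sum_congr rfl fun m' hm' => h m' (mem_Ico.mp hm').2
  rw [partitionOfDiff, partitionOfDiff, this]

lemma IsPartition.partitionOfDiff_partDiff {l : List ℕ} (hl : IsPartition l) (h : l.length ≤ N) :
    partitionOfDiff N (partDiff l) = l :=
  isPartition_partitionOfDiff.ext_getD hl fun m => by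
    rw [getD_partitionOfDiff, hl.tailSum_partDiff h]

end partitionOfDiff

lemma List.sum_range_getD {l : List ℕ} {N : ℕ} (h : l.length ≤ N) :
    ∑ j ∈ Finset.range N, l.getD j 0 = l.sum := by
  induction l generalizing N with
  | nil => simp
  | cons x xs ih =>
    obtain ⟨N, rfl⟩ := Nat.exists_eq_add_one_of_ne_zero (by simp at h; omega : N ≠ 0)
    rw [Finset.sum_range_succ', List.sum_cons, add_comm]
    simpa using ih (by simpa using h)

lemma Finset.sum_Ico_mul_eq_sum_Ico_sum_fin (f : ℕ → ℕ) {a b : ℕ} (hab : a ≤ b) (k : ℕ) :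
    ∑ m ∈ Ico (a * k) (b * k), f m = ∑ j ∈ Ico a b, ∑ i : Fin k, f (j * k + i) := by
  induction b, hab using Nat.le_induction with
  | base => simp
  | succ b hab ih =>
    rw [← sum_Ico_consecutive _ (Nat.mul_le_mul_right k hab) (Nat.mul_le_mul_right k b.le_succ),
      ih, sum_Ico_succ_top hab, Nat.succ_mul, sum_Ico_eq_sum_range (m := b * k),
      Nat.add_sub_cancel_left, Fin.sum_univ_eq_sum_range (fun i => f (b * k + i))]

lemma schmidtSum_eq_sum_getD_mul {k t : ℕ} (hk : 0 < k) {l : List ℕ} (h : l.length ≤ t * k) :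
    schmidtSum k l = ∑ j ∈ range t, l.getD (j * k) 0 := by
  have hvanish : ∀ m ∈ range (t * k), m ∉ range l.length →
      (if m % k = 0 then l.getD m 0 else 0) = 0 := fun m _ hm => by
    rw [List.getD_eq_default _ _ (by simpa using hm), ite_self]
  rw [schmidtSum, sum_subset (range_subset_range.mpr h) hvanish, ← Nat.Ico_zero_eq_range,
    ← zero_mul k, sum_Ico_mul_eq_sum_Ico_sum_fin _ (Nat.zero_le t), zero_mul,
    Nat.Ico_zero_eq_range]
  refine sum_congr rfl fun j _ => ?_
  rw [Fintype.sum_eq_single ⟨0, hk⟩ fun i hi => ?_]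
  · simp
  · rw [Nat.mul_add_mod_of_lt i.isLt, if_neg fun h => hi (Fin.ext h)]

lemma mul_eq_sub_one_mul_add {t : ℕ} (ht : 0 < t) (k : ℕ) : t * k = (t - 1) * k + k := by
  rw [← Nat.succ_mul, Nat.succ_eq_add_one, Nat.sub_add_cancel ht]

def deinterleave (k t : ℕ) (l : List ℕ) (i : Fin k) : List ℕ :=
  partitionOfDiff t fun j => partDiff l (j * k + i)

lemma partDiff_deinterleave {k t : ℕ} (l : List ℕ) (i : Fin k) {j : ℕ} (hj : j < t) :
    partDiff (deinterleave k t l i) j = partDiff l (j * k + i) :=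
  partDiff_partitionOfDiff hj

lemma isPartition_deinterleave {k t : ℕ} (l : List ℕ) (i : Fin k) :
    IsPartition (deinterleave k t l i) :=
  isPartition_partitionOfDiff

lemma length_deinterleave_le {k t : ℕ} (l : List ℕ) (i : Fin k) :
    (deinterleave k t l i).length ≤ t :=
  length_partitionOfDiff_le

section Interleave

variable {k t : ℕ} [NeZero k]

lemma Fin.ofNat_mul_add (j : ℕ) (i : Fin k) : Fin.ofNat k (j * k + i) = i :=
  Fin.ext (by rw [Fin.val_ofNat, Nat.mul_add_mod_of_lt i.isLt])

lemma Fin.mul_add_div_eq (j : ℕ) (i : Fin k) : (j * k + i) / k = j := by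
  rw [Nat.mul_comm, Nat.mul_add_div (Nat.pos_of_neZero k), Nat.div_eq_of_lt i.isLt, Nat.add_zero]

def interleave (t : ℕ) (α : Fin k → List ℕ) : List ℕ :=
  partitionOfDiff (t * k) fun m => partDiff (α (Fin.ofNat k m)) (m / k)

lemma isPartition_interleave (α : Fin k → List ℕ) : IsPartition (interleave t α) :=
  isPartition_partitionOfDiff

lemma length_interleave_le (α : Fin k → List ℕ) : (interleave t α).length ≤ t * k :=
  length_partitionOfDiff_le

lemma partDiff_interleave (α : Fin k → List ℕ) {m : ℕ} (hm : m < t * k) :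
    partDiff (interleave t α) m = partDiff (α (Fin.ofNat k m)) (m / k) :=
  partDiff_partitionOfDiff hm

lemma deinterleave_interleave {α : Fin k → List ℕ} (hα : ∀ i, IsPartition (α i))
    (hlen : ∀ i, (α i).length ≤ t) : deinterleave k t (interleave t α) = α := by
  funext i
  rw [deinterleave, ← (hα i).partitionOfDiff_partDiff (hlen i)]
  refine partitionOfDiff_congr fun j hj => ?_
  have hm : j * k + i < t * k := by nlinarith [i.isLt]
  rw [partDiff_interleave α hm, Fin.ofNat_mul_add, Fin.mul_add_div_eq]

lemma interleave_deinterleave {l : List ℕ} (hl : IsPartition l) (hlen : l.length ≤ t * k) :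
    interleave t (deinterleave k t l) = l := by
  refine (partitionOfDiff_congr fun m hm => ?_).trans (hl.partitionOfDiff_partDiff hlen)
  rw [partDiff_deinterleave l _ (Nat.div_lt_of_lt_mul (Nat.mul_comm t k ▸ hm)), Fin.val_ofNat,
    Nat.div_add_mod']

lemma getD_interleave_mul {α : Fin k → List ℕ} (hα : ∀ i, IsPartition (α i))
    (hlen : ∀ i, (α i).length ≤ t) {j : ℕ} (hj : j ≤ t) :
    (interleave t α).getD (j * k) 0 = ∑ i, (α i).getD j 0 := by
  rw [interleave, getD_partitionOfDiff, tailSum, sum_Ico_mul_eq_sum_Ico_sum_fin _ hj]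
  simp only [Fin.ofNat_mul_add, Fin.mul_add_div_eq]
  rw [sum_comm]
  exact sum_congr rfl fun i _ => (hα i).tailSum_partDiff (hlen i) j

lemma schmidtSum_interleave {α : Fin k → List ℕ} (hα : ∀ i, IsPartition (α i))
    (hlen : ∀ i, (α i).length ≤ t) : schmidtSum k (interleave t α) = ∑ i, (α i).sum := by
  rw [schmidtSum_eq_sum_getD_mul (Nat.pos_of_neZero k) (length_interleave_le α),
    sum_congr rfl fun j hj => getD_interleave_mul hα hlen (mem_range.mp hj).le, sum_comm]
  exact sum_congr rfl fun i _ => List.sum_range_getD (hlen i)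

lemma partDiff_interleave_last_block (α : Fin k → List ℕ) (ht : 0 < t) (i : Fin k) :
    partDiff (interleave t α) ((t - 1) * k + i) = partDiff (α i) (t - 1) := by
  have hm : (t - 1) * k + i < t * k := by
    rw [mul_eq_sub_one_mul_add ht]
    omega
  rw [partDiff_interleave α hm, Fin.ofNat_mul_add, Fin.mul_add_div_eq]

lemma length_interleave_eq_iff {α : Fin k → List ℕ} (hα : ∀ i, IsPartition (α i))
    (hlen : ∀ i, (α i).length ≤ t) (ht : 0 < t) {r : ℕ} (hr : 0 < r) (hrk : r ≤ k) :
    (interleave t α).length = (t - 1) * k + r ↔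
      (∀ i : Fin k, i.val = r - 1 → (α i).length = t) ∧
        ∀ i : Fin k, r ≤ i.val → (α i).length < t := by
  have hfull : ∀ i, (α i).length = t ↔ partDiff (α i) (t - 1) ≠ 0 := fun i =>
    (hα i).length_eq_iff_partDiff_pred_ne_zero (hlen i) ht
  have htk := mul_eq_sub_one_mul_add ht k
  rw [(isPartition_interleave α).length_eq_iff (length_interleave_le α) (by omega)]
  constructor
  · rintro ⟨hne, hzero⟩
    refine ⟨fun i hi => ?_, fun i hi => ?_⟩
    · rw [hfull, ← partDiff_interleave_last_block α ht, hi]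
      rwa [← Nat.add_sub_assoc hr]
    · refine (hlen i).lt_of_ne fun h => (hfull i).mp h ?_
      rw [← partDiff_interleave_last_block α ht]
      exact hzero _ (mem_Ico.mpr ⟨by omega, by omega⟩)
  · rintro ⟨hne, hzero⟩
    refine ⟨?_, fun m hm => ?_⟩
    · have := (hfull ⟨r - 1, by omega⟩).mp (hne _ rfl)
      rwa [← partDiff_interleave_last_block α ht, Fin.val_mk, ← Nat.add_sub_assoc hr] at this
    · obtain ⟨hm₁, hm₂⟩ := mem_Ico.mp hm
      have hdiv : m / k = t - 1 :=
        Nat.div_eq_of_lt_le (by omega) (by rw [Nat.sub_add_cancel ht]; omega)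
      have hmod : m = (t - 1) * k + (Fin.ofNat k m : ℕ) := by
        rw [Fin.val_ofNat, ← hdiv, Nat.div_add_mod']
      have hr_le : r ≤ (Fin.ofNat k m : ℕ) := by omega
      rw [hmod, partDiff_interleave_last_block α ht]
      exact not_not.mp (mt (hfull _).mpr (hzero _ hr_le).ne)

end Interleave

theorem unrestricted_schmidt_k_refined_general (n k t r : ℕ) (hk : 1 ≤ k)
    (ht : 1 ≤ t) (hr1 : 1 ≤ r) (hrk : r ≤ k) :
    Nat.card {α : Fin k → List ℕ //
        (∀ i, IsPartition (α i)) ∧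
        (∀ i : Fin k, (α i).length ≤ t) ∧
        (∀ i : Fin k, i.val = r - 1 → (α i).length = t) ∧
        (∀ i : Fin k, r ≤ i.val → (α i).length < t) ∧
        ∑ i, (α i).sum = n} =
      Nat.card {l : List ℕ //
        IsPartition l ∧ l.length = (t - 1) * k + r ∧ schmidtSum k l = n} := by
  have : NeZero k := ⟨by omega⟩
  have hL : (t - 1) * k + r ≤ t * k := by
    rw [mul_eq_sub_one_mul_add ht]
    omega
  refine Nat.card_congr
    { toFun := fun α => ⟨interleave t α.1, isPartition_interleave _, ?_, ?_⟩
      invFun := fun l => ⟨deinterleave k t l.1, isPartition_deinterleave l.1,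
        length_deinterleave_le l.1, ?_⟩
      left_inv := fun α => Subtype.ext (deinterleave_interleave α.2.1 α.2.2.1)
      right_inv := fun l => Subtype.ext (interleave_deinterleave l.2.1 (l.2.2.1.trans_le hL)) }
  · obtain ⟨hα, hlen, hfull, hshort, -⟩ := α.2
    exact (length_interleave_eq_iff hα hlen ht hr1 hrk).mpr ⟨hfull, hshort⟩
  · obtain ⟨hα, hlen, -, -, hsum⟩ := α.2
    rw [schmidtSum_interleave hα hlen, hsum]
  · obtain ⟨hl, hlen, hsum⟩ := l.2
    have hround := interleave_deinterleave hl (hlen.trans_le hL)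
    obtain ⟨hfull, hshort⟩ := (length_interleave_eq_iff (isPartition_deinterleave l.1)
      (length_deinterleave_le l.1) ht hr1 hrk).mp (by rwa [hround])
    refine ⟨hfull, hshort, ?_⟩
    rw [← schmidtSum_interleave (isPartition_deinterleave l.1) (length_deinterleave_le l.1),
      hround, hsum]

/-- Unrestricted Schmidt `k`-partition theorem (refined): `k`-tuples of partitions of
total weight `n` with maximal length `t`, attained last at (1-based) index `r`, are
equinumerous with unrestricted Schmidt `k`-partitions of `n` of length `(t-1)k + r`. -/
theorem unrestricted_schmidt_k_refined (n k t r : ℕ) (hn : 1 ≤ n) (hk : 1 ≤ k)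
    (ht : 1 ≤ t) (hr1 : 1 ≤ r) (hrk : r ≤ k) :
    Nat.card {α : Fin k → List ℕ //
        (∀ i, IsPartition (α i)) ∧
        (∀ i : Fin k, (α i).length ≤ t) ∧
        (∀ i : Fin k, i.val = r - 1 → (α i).length = t) ∧
        (∀ i : Fin k, r ≤ i.val → (α i).length < t) ∧
        ∑ i, (α i).sum = n} =
      Nat.card {l : List ℕ //
        IsPartition l ∧ l.length = (t - 1) * k + r ∧ schmidtSum k l = n} :=
  unrestricted_schmidt_k_refined_general n k t r hk ht hr1 hrk
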